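/- arXiv:2102.05779 — 7 statements merged into one kernel-verified Lean document; each statement's English description precedes it below -/
import Mathlib

section
/- Fix an integer p ≥ 3 and set λ = 2cos(π/p). Let U = ((λ,-1),(1,0)) and S = ((1,λ),(0,1)) in SL(2,ℝ), and for 1 ≤ j ≤ p-1 define V_j = U^{j-1}·S. Then the conjugacy class generators satisfy V_jᵀ = V_{p-j} for every 1 ≤ j ≤ p-1, where ᵀ denotes the matrix transpose. -/
/-!
`U` satisfies `U² = λU - 1`, so `U^(n+1) = Sₙ(λ) U - Sₙ₋₁(λ)` with the rescaled Chebyshev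
polynomials `Sₙ`; at `λ = 2cos(π/p)` one has `Sₙ(λ) = sin((n+1)π/p) / sin(π/p)`, whence
`U^p = -1`. With `J = !![0, -1; 1, 0]` we have `S = -UJ`, so `V_j = -U^j J`, and for every
`2 × 2` matrix `(AJ)ᵀ = -(adj A) J`. As `det U = 1`, `adj (U^j) = U^(-j) = -U^(p-j)`, so
`V_jᵀ = -U^(p-j) J = V_(p-j)`.
-/

open Matrix

open Polynomial Polynomial.Chebyshev in
theorem pow_succ_eq_S_eval_smul_sub {R M : Type*} [CommRing R] [Ring M] [Algebra R M]
    {a : M} {t : R} (ha : a ^ 2 = t • a - 1) (n : ℕ) :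
    a ^ (n + 1) = (S R n).eval t • a - (S R (n - 1)).eval t • 1 := by
  induction n with
  | zero => simp
  | succ n ih =>
    rw [pow_succ', ih, mul_sub, mul_smul_comm, mul_smul_comm, ← sq, ha, mul_one]
    push_cast
    rw [S_add_one R (n : ℤ), add_sub_cancel_right]
    simp only [eval_sub, eval_mul, eval_X]
    module

section Trigonometric

open Real Polynomial Polynomial.Chebyshev

variable {p : ℕ}

theorem sin_pi_div_natCast_ne_zero (hp : 2 ≤ p) : sin (π / p) ≠ 0 :=
  (sin_pos_of_pos_of_lt_pi (by positivity) (div_lt_self pi_pos (by exact_mod_cast hp))).ne'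

theorem S_eval_two_mul_cos_pi_div (hp : 2 ≤ p) (k : ℤ) :
    (S ℝ k).eval (2 * cos (π / p)) = sin ((k + 1) * (π / p)) / sin (π / p) := by
  rw [eq_div_iff (sin_pi_div_natCast_ne_zero hp), S_two_mul_real_cos]

theorem pow_eq_neg_one_of_sq_eq_two_mul_cos_smul_sub {M : Type*} [Ring M] [Algebra ℝ M]
    (hp : 2 ≤ p) {a : M} (ha : a ^ 2 = (2 * cos (π / p)) • a - 1) : a ^ p = -1 := by
  have hp0 : (p : ℝ) ≠ 0 := by positivity
  have h := pow_succ_eq_S_eval_smul_sub ha (p - 1)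
  rw [Nat.sub_add_cancel (by omega)] at h
  rw [h, S_eval_two_mul_cos_pi_div hp, S_eval_two_mul_cos_pi_div hp]
  push_cast [Nat.cast_sub (show 1 ≤ p by omega)]
  have h_top : ((p : ℝ) - 1 + 1) * (π / p) = π := by field_simp; ring
  have h_prev : ((p : ℝ) - 1 - 1 + 1) * (π / p) = π - π / p := by field_simp; ring
  rw [h_top, h_prev, sin_pi, sin_pi_sub, zero_div, div_self (sin_pi_div_natCast_ne_zero hp)]
  simp

end Trigonometric

namespace Matrix

variable {R : Type*} [CommRing R]

theorem transpose_mul_fin_two_rotation (A : Matrix (Fin 2) (Fin 2) R) :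
    (A * !![0, -1; 1, 0])ᵀ = -(adjugate A * !![0, -1; 1, 0]) := by
  rw [adjugate_fin_two, eta_fin_two A]
  ext i j
  fin_cases i <;> fin_cases j <;> simp

theorem adjugate_eq_of_det_eq_one_of_mul_eq_one {n : Type*} [Fintype n] [DecidableEq n]
    {A B : Matrix n n R} (hdet : A.det = 1) (h : A * B = 1) : adjugate A = B := by
  rw [← mul_one (adjugate A), ← h, ← Matrix.mul_assoc, adjugate_mul, hdet, one_smul,
    Matrix.one_mul]

end Matrix

section Hecke

variable {lam : ℝ}

theorem hecke_U_sq : !![lam, -1; 1, 0] ^ 2 = lam • !![lam, -1; 1, 0] - 1 := by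
  ext i j
  fin_cases i <;> fin_cases j <;> simp [sq, Matrix.mul_apply, Fin.sum_univ_two, sub_eq_add_neg]

theorem hecke_U_det : (!![lam, -1; 1, 0] : Matrix (Fin 2) (Fin 2) ℝ).det = 1 := by
  simp [det_fin_two_of]

theorem hecke_S_eq_neg_U_mul : (!![1, lam; 0, 1] : Matrix (Fin 2) (Fin 2) ℝ) =
    -(!![lam, -1; 1, 0] * !![0, -1; 1, 0]) := by
  ext i j
  fin_cases i <;> fin_cases j <;> simp

end Hecke

theorem stmt1_general (p : ℕ)
    (lam : ℝ) (hlam : lam = 2 * Real.cos (Real.pi / p))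
    (U S : Matrix (Fin 2) (Fin 2) ℝ)
    (hU : U = !![lam, -1; 1, 0]) (hS : S = !![1, lam; 0, 1])
    (V : ℕ → Matrix (Fin 2) (Fin 2) ℝ)
    (hV : ∀ j : ℕ, 1 ≤ j → j ≤ p - 1 → V j = U ^ (j - 1) * S) :
    ∀ j : ℕ, 1 ≤ j → j ≤ p - 1 → (V j)ᵀ = V (p - j) := by
  intro j hj hjp
  have hUp : U ^ p = -1 := by
    subst hU hlam
    exact pow_eq_neg_one_of_sq_eq_two_mul_cos_smul_sub (by omega) hecke_U_sq
  have hV_eq : ∀ k, 1 ≤ k → k ≤ p - 1 → V k = -(U ^ k * !![0, -1; 1, 0]) := by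
    intro k hk hkp
    rw [hV k hk hkp, hS, hecke_S_eq_neg_U_mul, ← hU, mul_neg, ← Matrix.mul_assoc, ← pow_succ,
      Nat.sub_add_cancel hk]
  have h_inv : U ^ j * -U ^ (p - j) = 1 := by
    rw [mul_neg, ← pow_add, Nat.add_sub_cancel' (by omega), hUp, neg_neg]
  rw [hV_eq j hj hjp, hV_eq (p - j) (by omega) (by omega), transpose_neg,
    transpose_mul_fin_two_rotation, neg_neg,
    adjugate_eq_of_det_eq_one_of_mul_eq_one (by rw [det_pow, hU, hecke_U_det, one_pow]) h_inv,
    neg_mul]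

/-- Fix an integer `p ≥ 3` and set `λ = 2cos(π/p)`.  Let
`U = ((λ,-1),(1,0))` and `S = ((1,λ),(0,1))`, and for `1 ≤ j ≤ p-1` define
`V_j = U^(j-1) * S`.  Then the conjugacy class generators satisfy
`V_jᵀ = V_(p-j)` for every `1 ≤ j ≤ p-1`. -/
theorem stmt1 (p : ℕ) (hp : 3 ≤ p)
    (lam : ℝ) (hlam : lam = 2 * Real.cos (Real.pi / p))
    (U S : Matrix (Fin 2) (Fin 2) ℝ)
    (hU : U = !![lam, -1; 1, 0]) (hS : S = !![1, lam; 0, 1])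
    (V : ℕ → Matrix (Fin 2) (Fin 2) ℝ)
    (hV : ∀ j : ℕ, 1 ≤ j → j ≤ p - 1 → V j = U ^ (j - 1) * S) :
    ∀ j : ℕ, 1 ≤ j → j ≤ p - 1 → (V j)ᵀ = V (p - j) :=
  stmt1_general p lam hlam U S hU hS V hV
end

section
/- Let n and q be positive integers. Then the number of primitive words of length n on q letters is P_q(n) = Σ_{d | n} μ(d)·q^{n/d}, where the sum runs over the positive divisors d of n and μ is the Möbius function. -/
/-!
The periods of a word form a subgroup of `ZMod n`, so they are closed under `gcd`. Hence a primitive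
word `v` of length `d ∣ n`, repeated `n / d` times, has exactly the multiples of `d` as its
divisor periods, and conversely every word of length `n` is the repetition of a primitive word of
length its least divisor period. Counting all `q ^ n` words this way gives
`∑_{d ∣ n} P_q(d) = q ^ n`, and Möbius inversion gives the formula.
-/

/-- A word of length `m` on `q` letters (a function `ZMod m → Fin q`) is
`d`-periodic if `w (i + d) = w i` for all `i`. -/
def WordPeriodic (m q : ℕ) (w : ZMod m → Fin q) (d : ℕ) : Prop :=
  ∀ i : ZMod m, w (i + (d : ZMod m)) = w i

/-- A word of length `m` is primitive if the only positive divisor `d` of `m`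
for which it is `d`-periodic is `d = m`. -/
def WordPrimitive (m q : ℕ) (w : ZMod m → Fin q) : Prop :=
  ∀ d : ℕ, 0 < d → d ∣ m → WordPeriodic m q w d → d = m

/-- The number of primitive words of length `m` on `q` letters. -/
noncomputable def numPrimitiveWords (m q : ℕ) : ℕ :=
  Nat.card {w : ZMod m → Fin q // WordPrimitive m q w}

def periodGroup (m q : ℕ) (w : ZMod m → Fin q) : AddSubgroup (ZMod m) where
  carrier := {x | ∀ i, w (i + x) = w i}
  zero_mem' i := by rw [add_zero]
  add_mem' hx hy i := by rw [← add_assoc, hy, hx]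
  neg_mem' {x} hx i := by simpa [sub_eq_add_neg] using (hx (i - x)).symm

variable {m q : ℕ}

theorem wordPeriodic_iff_natCast_mem_periodGroup (w : ZMod m → Fin q) (d : ℕ) :
    WordPeriodic m q w d ↔ (d : ZMod m) ∈ periodGroup m q w :=
  Iff.rfl

theorem wordPeriodic_self (w : ZMod m → Fin q) : WordPeriodic m q w m := by
  intro i
  rw [ZMod.natCast_self, add_zero]

theorem WordPeriodic.gcd {w : ZMod m → Fin q} {a b : ℕ} (ha : WordPeriodic m q w a)
    (hb : WordPeriodic m q w b) : WordPeriodic m q w (a.gcd b) := by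
  rw [wordPeriodic_iff_natCast_mem_periodGroup] at ha hb ⊢
  have bezout :
      ((a.gcd b : ℕ) : ZMod m) = a.gcdA b • (a : ZMod m) + a.gcdB b • (b : ZMod m) := by
    have h := congrArg (Int.cast : ℤ → ZMod m) (Nat.gcd_eq_gcd_ab a b)
    push_cast at h
    rw [h, zsmul_eq_mul, zsmul_eq_mul, mul_comm _ (a : ZMod m), mul_comm _ (b : ZMod m)]
  rw [bezout]
  exact add_mem (zsmul_mem ha _) (zsmul_mem hb _)

theorem wordPeriodic_comp_castHom_iff {d e : ℕ} (hd : d ∣ m) (v : ZMod d → Fin q) :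
    WordPeriodic m q (v ∘ ZMod.castHom hd (ZMod d)) e ↔ WordPeriodic d q v e := by
  simp only [WordPeriodic, Function.comp_apply, map_add, map_natCast]
  exact (ZMod.ringHom_surjective (ZMod.castHom hd (ZMod d))).forall
    (p := fun i => v (i + e) = v i) |>.symm

theorem exists_eq_comp_castHom_of_wordPeriodic {d : ℕ} (hd : d ∣ m) {w : ZMod m → Fin q}
    (hw : WordPeriodic m q w d) : ∃ v : ZMod d → Fin q, w = v ∘ ZMod.castHom hd (ZMod d) := by
  have : Nonempty (Fin q) := ⟨w 0⟩
  refine (Function.factorsThrough_iff w).mp fun x y hxy => ?_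
  obtain ⟨k, hk⟩ : (d : ℤ) ∣ ((x - y).cast : ℤ) := by
    rw [← ZMod.intCast_zmod_eq_zero_iff_dvd, ← map_intCast (ZMod.castHom hd (ZMod d)),
      ZMod.intCast_zmod_cast, map_sub, hxy, sub_self]
  have hmem : x - y ∈ periodGroup m q w := by
    rw [← ZMod.intCast_zmod_cast (x - y), hk, Int.cast_mul, Int.cast_natCast, mul_comm,
      ← zsmul_eq_mul]
    exact zsmul_mem hw k
  simpa using hmem y

theorem WordPrimitive.dvd_of_wordPeriodic_comp_castHom {d e : ℕ} (hd : d ∣ m) (hd0 : 0 < d)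
    {v : ZMod d → Fin q} (hv : WordPrimitive d q v)
    (he : WordPeriodic m q (v ∘ ZMod.castHom hd (ZMod d)) e) : d ∣ e := by
  rw [wordPeriodic_comp_castHom_iff] at he
  have hgcd : e.gcd d = d := hv _ (Nat.gcd_pos_of_pos_right e hd0) (Nat.gcd_dvd_right e d)
    (he.gcd (wordPeriodic_self v))
  exact hgcd ▸ Nat.gcd_dvd_left e d

/-- Composing with the reduction `ZMod n → ZMod d` repeats a word of length `d` exactly `n / d`
times. -/
def repeatPrimitive (n q : ℕ)
    (x : Σ d : n.divisors, {v : ZMod d → Fin q // WordPrimitive d q v}) : ZMod n → Fin q :=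
  x.2.1 ∘ ZMod.castHom (Nat.dvd_of_mem_divisors x.1.2) _

theorem repeatPrimitive_injective (n q : ℕ) : Function.Injective (repeatPrimitive n q) := by
  rintro ⟨⟨d, hd⟩, v, hv⟩ ⟨⟨e, he⟩, u, hu⟩ h
  have hdn := Nat.dvd_of_mem_divisors hd
  have hen := Nat.dvd_of_mem_divisors he
  change v ∘ ZMod.castHom hdn _ = u ∘ ZMod.castHom hen _ at h
  have hvu : d ∣ e := hv.dvd_of_wordPeriodic_comp_castHom hdn (Nat.pos_of_mem_divisors hd)
    (h ▸ (wordPeriodic_comp_castHom_iff hen u).mpr (wordPeriodic_self u))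
  have huv : e ∣ d := hu.dvd_of_wordPeriodic_comp_castHom hen (Nat.pos_of_mem_divisors he)
    (h ▸ (wordPeriodic_comp_castHom_iff hdn v).mpr (wordPeriodic_self v))
  obtain rfl := Nat.dvd_antisymm hvu huv
  obtain rfl : v = u := (ZMod.ringHom_surjective _).injective_comp_right h
  rfl

theorem repeatPrimitive_surjective {n : ℕ} (hn : 0 < n) (q : ℕ) :
    Function.Surjective (repeatPrimitive n q) := by
  classical
  intro w
  have hex : ∃ d, 0 < d ∧ d ∣ n ∧ WordPeriodic n q w d :=
    ⟨n, hn, dvd_rfl, wordPeriodic_self w⟩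
  obtain ⟨hd0, hdn, hwd⟩ := Nat.find_spec hex
  obtain ⟨v, hwv⟩ := exists_eq_comp_castHom_of_wordPeriodic hdn hwd
  have hv : WordPrimitive (Nat.find hex) q v := fun e he0 hed hve =>
    le_antisymm (Nat.le_of_dvd hd0 hed) <| Nat.find_min' hex
      ⟨he0, hed.trans hdn, hwv ▸ (wordPeriodic_comp_castHom_iff hdn v).mpr hve⟩
  exact ⟨⟨⟨_, Nat.mem_divisors.mpr ⟨hdn, hn.ne'⟩⟩, v, hv⟩, hwv.symm⟩

theorem sum_divisors_numPrimitiveWords {n : ℕ} (hn : 0 < n) (q : ℕ) :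
    ∑ d ∈ n.divisors, numPrimitiveWords d q = q ^ n := by
  have (d : n.divisors) : Finite {v : ZMod d → Fin q // WordPrimitive d q v} :=
    have : NeZero (d : ℕ) := ⟨(Nat.pos_of_mem_divisors d.2).ne'⟩
    inferInstance
  have : NeZero n := ⟨hn.ne'⟩
  calc ∑ d ∈ n.divisors, numPrimitiveWords d q
      = Nat.card (Σ d : n.divisors, {v : ZMod d → Fin q // WordPrimitive d q v}) := by
        rw [Nat.card_sigma, ← Finset.sum_coe_sort]
        rfl
    _ = Nat.card (ZMod n → Fin q) := Nat.card_eq_of_bijective _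
        ⟨repeatPrimitive_injective n q, repeatPrimitive_surjective hn q⟩
    _ = q ^ n := by rw [Nat.card_fun, Nat.card_zmod, Nat.card_eq_fintype_card, Fintype.card_fin]

theorem stmt6_general (n q : ℕ) (hn : 0 < n) :
    (numPrimitiveWords n q : ℤ) =
      ∑ d ∈ n.divisors, ArithmeticFunction.moebius d * (q : ℤ) ^ (n / d) := by
  have inversion := ArithmeticFunction.sum_eq_iff_sum_mul_moebius_eq
    (f := fun d => (numPrimitiveWords d q : ℤ)) (g := fun k => (q : ℤ) ^ k) |>.mp
    (fun k hk => by exact_mod_cast sum_divisors_numPrimitiveWords hk q) n hn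
  rw [← inversion,
    ← Nat.sum_divisorsAntidiagonal fun d k => ArithmeticFunction.moebius d * (q : ℤ) ^ k]
  simp only [Int.cast_id]

/-- Let `n` and `q` be positive integers.  Then the number of
primitive words of length `n` on `q` letters is
`P_q(n) = Σ_{d | n} μ(d)·q^(n/d)`, where `μ` is the Möbius function. -/
theorem stmt6 (n q : ℕ) (hn : 0 < n) (hq : 0 < q) :
    (numPrimitiveWords n q : ℤ) =
      ∑ d ∈ n.divisors, ArithmeticFunction.moebius d * (q : ℤ) ^ (n / d) :=
  stmt6_general n q hn
end

section
/- Let n and q be positive integers. The additive group ZMod n acts on words of length n on q letters by rotation: (r · w)(i) = w(i + r). Then the number C_q(n) of orbits of this rotation action on the set of primitive words of length n on q letters satisfies n·C_q(n) = Σ_{d | n} μ(d)·q^{n/d}; that is, C_q(n) = (1/n)·Σ_{d | n} μ(d)·q^{n/d}. (In particular, every rotation orbit of a primitive word has exactly n elements.) -/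
/-- Two primitive words of length `n` are rotation-equivalent if one is
obtained from the other by the rotation action of `ZMod n`:
`(r · w)(i) = w (i + r)`. -/
def rotSetoid (n q : ℕ) : Setoid {w : ZMod n → Fin q // WordPrimitive n q w} where
  r w₁ w₂ := ∃ r : ZMod n, ∀ i : ZMod n, w₂.1 i = w₁.1 (i + r)
  iseqv := by
    constructor
    · intro w
      exact ⟨0, fun i => by rw [add_zero]⟩
    · rintro w₁ w₂ ⟨r, hr⟩
      exact ⟨-r, fun i => by
        rw [hr (i + -r), add_assoc, neg_add_cancel, add_zero]⟩
    · rintro w₁ w₂ w₃ ⟨r, hr⟩ ⟨s, hs⟩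
      exact ⟨s + r, fun i => by rw [hs i, hr (i + s), add_assoc]⟩

/-- The number of rotation orbits of primitive words of length `n` on `q`
letters (the number of primitive necklaces). -/
noncomputable def numPrimitiveNecklaces (n q : ℕ) : ℕ :=
  Nat.card (Quotient (rotSetoid n q))

open Function Finset

namespace Word

variable {α : Type*} {n d q : ℕ}

def rotate (r : ZMod n) (w : ZMod n → α) : ZMod n → α := fun i => w (i + r)

@[simp] lemma rotate_apply (r : ZMod n) (w : ZMod n → α) (i : ZMod n) :
    rotate r w i = w (i + r) := rfl

lemma rotate_zero : rotate (0 : ZMod n) = (id : (ZMod n → α) → _) := by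
  funext w i; simp

lemma rotate_rotate (r s : ZMod n) (w : ZMod n → α) :
    rotate r (rotate s w) = rotate (r + s) w := by
  funext i; simp [add_assoc]

lemma iterate_rotate_one (k : ℕ) :
    (rotate (1 : ZMod n) : (ZMod n → α) → _)^[k] = rotate (k : ZMod n) := by
  induction k with
  | zero => simp [rotate_zero]
  | succ k ih => funext w; simp [ih, rotate_rotate]

lemma isPeriodicPt_rotate_one_iff {k : ℕ} {w : ZMod n → α} :
    IsPeriodicPt (rotate 1) k w ↔ rotate (k : ZMod n) w = w := by
  rw [IsPeriodicPt, IsFixedPt, iterate_rotate_one]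

lemma isPeriodicPt_rotate_one_length (w : ZMod n → α) : IsPeriodicPt (rotate 1) n w := by
  simp [isPeriodicPt_rotate_one_iff, rotate_zero]

lemma minimalPeriod_rotate_one_dvd (w : ZMod n → α) : minimalPeriod (rotate 1) w ∣ n :=
  (isPeriodicPt_rotate_one_length w).minimalPeriod_dvd

lemma wordPeriodic_iff_isPeriodicPt {w : ZMod n → Fin q} :
    WordPeriodic n q w d ↔ IsPeriodicPt (rotate 1) d w := by
  rw [isPeriodicPt_rotate_one_iff, funext_iff]; rfl

lemma wordPrimitive_iff_minimalPeriod_eq [NeZero n] {w : ZMod n → Fin q} :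
    WordPrimitive n q w ↔ minimalPeriod (rotate 1) w = n := by
  simp only [WordPrimitive, wordPeriodic_iff_isPeriodicPt]
  refine ⟨fun h => h _ ?_ (minimalPeriod_rotate_one_dvd w) (isPeriodicPt_minimalPeriod _ _),
    fun h d _ hdn hd => Nat.dvd_antisymm hdn (h ▸ hd.minimalPeriod_dvd)⟩
  exact (isPeriodicPt_rotate_one_length w).minimalPeriod_pos (NeZero.pos n)

lemma _root_.WordPrimitive.rotate {w : ZMod n → Fin q} (hw : WordPrimitive n q w)
    (r : ZMod n) : WordPrimitive n q (Word.rotate r w) := by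
  intro d hd hdn hper
  refine hw d hd hdn fun i => ?_
  simpa [add_right_comm] using hper (i - r)

lemma _root_.WordPrimitive.eq_zero_of_rotate_eq [NeZero n] {w : ZMod n → Fin q}
    (hw : WordPrimitive n q w) {r : ZMod n} (h : rotate r w = w) : r = 0 := by
  have hper : IsPeriodicPt (rotate 1) r.val w := by
    rwa [isPeriodicPt_rotate_one_iff, ZMod.natCast_zmod_val]
  have hdvd : n ∣ r.val := by
    simpa [wordPrimitive_iff_minimalPeriod_eq.mp hw] using hper.minimalPeriod_dvd
  exact (ZMod.val_eq_zero r).mp (Nat.eq_zero_of_dvd_of_lt hdvd (ZMod.val_lt r))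

def extend (hd : d ∣ n) (v : ZMod d → α) : ZMod n → α := v ∘ ZMod.castHom hd (ZMod d)

lemma extend_injective (hd : d ∣ n) : Injective (extend hd : (ZMod d → α) → _) :=
  (ZMod.castHom_surjective hd).injective_comp_right

lemma semiconj_extend_rotate_one (hd : d ∣ n) :
    Semiconj (extend hd : (ZMod d → α) → _) (rotate 1) (rotate 1) := by
  intro v; funext i; simp only [extend, comp_apply, rotate_apply, map_add, map_one]

lemma minimalPeriod_rotate_one_extend (hd : d ∣ n) (v : ZMod d → α) :
    minimalPeriod (rotate 1) (extend hd v) = minimalPeriod (rotate 1) v := by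
  refine minimalPeriod_eq_minimalPeriod_iff.mpr fun k => ?_
  rw [IsPeriodicPt, IsFixedPt, ← ((semiconj_extend_rotate_one hd).iterate_right k).eq]
  exact (extend_injective hd).eq_iff

-- A `d`-periodic word is read off its first `d` letters: `w i = w (i.val % d)`.
lemma exists_extend_eq [NeZero n] [NeZero d] (hd : d ∣ n) {w : ZMod n → α}
    (hw : IsPeriodicPt (rotate 1) d w) : ∃ v, extend hd v = w := by
  refine ⟨fun j => w j.val, funext fun i => ?_⟩
  have hrot :=
    congrFun (isPeriodicPt_rotate_one_iff.mp (hw.mul_const (i.val / d))) (i.val % d : ℕ)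
  simp only [extend, comp_apply, ZMod.castHom_apply, ← ZMod.natCast_val, ZMod.val_natCast]
  rw [← hrot, rotate_apply, ← Nat.cast_add, Nat.mod_add_div, ZMod.natCast_zmod_val]

lemma card_minimalPeriod_rotate_one_eq_of_dvd [NeZero n] [NeZero d] (hd : d ∣ n) :
    Nat.card {w : ZMod n → α // minimalPeriod (rotate 1) w = d} =
      Nat.card {v : ZMod d → α // minimalPeriod (rotate 1) v = d} := by
  refine (Nat.card_eq_of_bijective
    (fun v => ⟨extend hd v.1, (minimalPeriod_rotate_one_extend hd v.1).trans v.2⟩)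
    ⟨fun v v' h => Subtype.ext (extend_injective hd (congrArg Subtype.val h)), ?_⟩).symm
  rintro ⟨w, hw⟩
  obtain ⟨v, rfl⟩ := exists_extend_eq hd (hw ▸ isPeriodicPt_minimalPeriod (rotate 1) w)
  exact ⟨⟨v, (minimalPeriod_rotate_one_extend hd v).symm.trans hw⟩, rfl⟩

lemma sum_card_minimalPeriod_rotate_one_eq [Fintype α] [NeZero n] :
    ∑ d ∈ n.divisors, Nat.card {v : ZMod d → α // minimalPeriod (rotate 1) v = d} =
      Fintype.card α ^ n := by
  classical
  calc ∑ d ∈ n.divisors, Nat.card {v : ZMod d → α // minimalPeriod (rotate 1) v = d}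
      = ∑ d ∈ n.divisors, #{w : ZMod n → α | minimalPeriod (rotate 1) w = d} := by
        refine sum_congr rfl fun d hd => ?_
        have : NeZero d := ⟨(Nat.pos_of_mem_divisors hd).ne'⟩
        rw [← card_minimalPeriod_rotate_one_eq_of_dvd (Nat.dvd_of_mem_divisors hd),
          Nat.card_eq_fintype_card, Fintype.card_subtype]
    _ = #(univ : Finset (ZMod n → α)) :=
        (card_eq_sum_card_fiberwise fun w _ =>
          Nat.mem_divisors.mpr ⟨minimalPeriod_rotate_one_dvd w, NeZero.ne n⟩).symm
    _ = Fintype.card α ^ n := by simp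

lemma sum_card_wordPrimitive [NeZero n] :
    ∑ d ∈ n.divisors, Nat.card {v : ZMod d → Fin q // WordPrimitive d q v} = q ^ n := by
  have h := sum_card_minimalPeriod_rotate_one_eq (α := Fin q) (n := n)
  rw [Fintype.card_fin] at h
  rw [← h]
  refine sum_congr rfl fun d hd => Nat.card_congr (Equiv.subtypeEquivRight fun v => ?_)
  have : NeZero d := ⟨(Nat.pos_of_mem_divisors hd).ne'⟩
  exact wordPrimitive_iff_minimalPeriod_eq

instance : AddAction (ZMod n) {w : ZMod n → Fin q // WordPrimitive n q w} where
  vadd r w := ⟨rotate r w.1, w.2.rotate r⟩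
  zero_vadd w := Subtype.ext (congrFun rotate_zero w.1)
  add_vadd r s w := Subtype.ext (rotate_rotate r s w.1).symm

lemma rotSetoid_eq_orbitRel : rotSetoid n q = AddAction.orbitRel (ZMod n) _ := by
  ext w₁ w₂
  rw [AddAction.orbitRel_apply, AddAction.mem_orbit_symm]
  exact exists_congr fun r => ⟨fun h => Subtype.ext (funext fun i => (h i).symm),
    fun h i => (congrFun (congrArg Subtype.val h) i).symm⟩

lemma stabilizer_wordPrimitive_eq_bot [NeZero n]
    (w : {w : ZMod n → Fin q // WordPrimitive n q w}) : AddAction.stabilizer (ZMod n) w = ⊥ :=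
  (AddSubgroup.eq_bot_iff_forall _).mpr fun _ hr =>
    w.2.eq_zero_of_rotate_eq (congrArg Subtype.val hr)

lemma card_wordPrimitive_eq_mul [NeZero n] :
    Nat.card {w : ZMod n → Fin q // WordPrimitive n q w} = n * numPrimitiveNecklaces n q := by
  rw [Nat.card_congr (AddAction.selfEquivOrbitsQuotientProd stabilizer_wordPrimitive_eq_bot),
    Nat.card_prod, Nat.card_zmod, numPrimitiveNecklaces, rotSetoid_eq_orbitRel, mul_comm]

end Word

theorem stmt7_general (n q : ℕ) (hn : 0 < n) :
    (n : ℤ) * numPrimitiveNecklaces n q =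
      ∑ d ∈ n.divisors, ArithmeticFunction.moebius d * (q : ℤ) ^ (n / d) := by
  have hsum : ∀ m > 0, ∑ d ∈ m.divisors,
      (Nat.card {v : ZMod d → Fin q // WordPrimitive d q v} : ℤ) = q ^ m :=
    fun m hm => by
      have : NeZero m := NeZero.of_pos hm
      exact_mod_cast Word.sum_card_wordPrimitive
  have : NeZero n := NeZero.of_pos hn
  calc (n : ℤ) * numPrimitiveNecklaces n q
      = Nat.card {w : ZMod n → Fin q // WordPrimitive n q w} := by
        rw [Word.card_wordPrimitive_eq_mul]; push_cast; rfl
    _ = ∑ x ∈ n.divisorsAntidiagonal,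
          (ArithmeticFunction.moebius x.1 : ℤ) * (q : ℤ) ^ x.2 :=
        (ArithmeticFunction.sum_eq_iff_sum_mul_moebius_eq.mp hsum n hn).symm
    _ = _ := Nat.sum_divisorsAntidiagonal fun d e =>
        (ArithmeticFunction.moebius d : ℤ) * (q : ℤ) ^ e

/-- Let `n` and `q` be positive integers.  The additive group
`ZMod n` acts on words of length `n` on `q` letters by rotation:
`(r · w)(i) = w (i + r)`.  Then the number `C_q(n)` of orbits of this rotation
action on the set of primitive words of length `n` on `q` letters satisfies
`n·C_q(n) = Σ_{d | n} μ(d)·q^(n/d)`. -/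
theorem stmt7 (n q : ℕ) (hn : 0 < n) (hq : 0 < q) :
    (n : ℤ) * numPrimitiveNecklaces n q =
      ∑ d ∈ n.divisors, ArithmeticFunction.moebius d * (q : ℤ) ^ (n / d) :=
  stmt7_general n q hn
end

section
/- Fix an integer p ≥ 3, set λ = 2cos(π/p), and let k be an odd positive integer. Define q(z) = (z² - λz - 1)^{-k} + (z² + λz - 1)^{-k}. Then q satisfies the rational period function relations of weight 2k on the Hecke group G_p: for every z ∈ ℂ with Im z ≠ 0, q(z) + z^{-2k}·q(-1/z) = 0 and Σ_{j=0}^{p-1} (q |_{2k} U^j)(z) = 0. -/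
/-- The weight-`2k` slash operator: for a real 2×2 matrix `M = ((a,b),(c,d))`,
`(f ∣_{2k} M)(z) = (cz+d)^{-2k} · f((az+b)/(cz+d))`. -/
noncomputable def slash (k : ℕ) (M : Matrix (Fin 2) (Fin 2) ℝ)
    (f : ℂ → ℂ) (z : ℂ) : ℂ :=
  ((M 1 0 : ℂ) * z + (M 1 1 : ℂ)) ^ (-(2 * (k : ℤ))) *
    f (((M 0 0 : ℂ) * z + (M 0 1 : ℂ)) / ((M 1 0 : ℂ) * z + (M 1 1 : ℂ)))

/-!
With `Q_b(X, Y) = X² - bXY - Y²` we have `q = Q_λ(·,1)^{-k} + Q_{-λ}(·,1)^{-k}`, and slashing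
`Q_b(·,1)^{-k}` by `M` gives `Q_b(az+b, cz+d)^{-k}`. Since `Q_λ(λX - Y, X) = -Q_{-λ}(X, Y)` and `k` is
odd, `q ∣ M = F(M) - F(UM)` with `F(M) = Q_λ(az+b, cz+d)^{-k}`, so the sum over the `U^j` telescopes
to `F(1) - F(U^p)`. From `U² = λU - 1`, the power `U^n` is a combination of `U` and `1` whose
coefficients are Chebyshev polynomials of the second kind at `cos(π/p)`; evaluating them by
`sin(nθ)/sin θ` gives `U^p = -1`, hence `F(U^p) = F(1)`. The relation for `T` is
`Q_b(-1, z) = -Q_b(z, 1)`.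
-/

open Real

section Chebyshev

open Polynomial Polynomial.Chebyshev

theorem pow_eq_chebyshevU_eval_smul_sub {R A : Type*} [CommRing R] [Ring A] [Algebra R A]
    (x : A) (c : R) (hx : x ^ 2 = (2 * c) • x - 1) (n : ℕ) :
    x ^ n = (U R (n - 1)).eval c • x - (U R (n - 2)).eval c • 1 := by
  induction n with
  | zero => simp
  | succ n ih =>
    have hrec : (U R n).eval c = 2 * c * (U R (n - 1)).eval c - (U R (n - 2)).eval c := by
      simp [U_eq R (n : ℤ)]
    rw [pow_succ, ih, sub_mul, smul_mul_assoc, smul_mul_assoc, one_mul, ← sq, hx]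
    push_cast
    rw [add_sub_cancel_right, show (n : ℤ) + 1 - 2 = n - 1 by ring, hrec]
    module

theorem heckeGenerator_pow_eq_neg_one {p : ℕ} (hp : 2 ≤ p) :
    !![2 * cos (π / p), -1; 1, 0] ^ p = -1 := by
  set θ := π / p
  have hp0 : (0 : ℝ) < p := by positivity
  have hsin : sin θ ≠ 0 :=
    (sin_pos_of_pos_of_lt_pi (by positivity)
      (div_lt_self pi_pos (by exact_mod_cast (by omega : 1 < p)))).ne'
  have hpθ : p * θ = π := mul_div_cancel₀ _ hp0.ne'
  have hsq : !![2 * cos θ, -1; 1, 0] ^ 2 = (2 * cos θ) • !![2 * cos θ, -1; 1, 0] - 1 := by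
    ext i j; fin_cases i <;> fin_cases j <;> simp [sq]; ring
  have hU₁ : (U ℝ (p - 1)).eval (cos θ) = 0 := by
    have h := U_real_cos θ (p - 1)
    rw [show (((p - 1 : ℤ)) : ℝ) + 1 = p by push_cast; ring, hpθ, sin_pi] at h
    exact (mul_eq_zero.mp h).resolve_right hsin
  have hU₂ : (U ℝ (p - 2)).eval (cos θ) = 1 := by
    have h := U_real_cos θ (p - 2)
    rw [show (((p - 2 : ℤ)) : ℝ) + 1 = p - 1 by push_cast; ring, sub_one_mul, hpθ,
      sin_pi_sub] at h
    exact (mul_eq_right₀ hsin).mp h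
  rw [pow_eq_chebyshevU_eval_smul_sub _ _ hsq, hU₁, hU₂]
  simp

end Chebyshev

section Slash

variable (M : Matrix (Fin 2) (Fin 2) ℝ) (z : ℂ)

noncomputable def moebiusNum : ℂ := (M 0 0 : ℂ) * z + (M 0 1 : ℂ)

noncomputable def moebiusDen : ℂ := (M 1 0 : ℂ) * z + (M 1 1 : ℂ)

theorem slash_apply (k : ℕ) (f : ℂ → ℂ) :
    slash k M f z = moebiusDen M z ^ (-(2 * (k : ℤ))) * f (moebiusNum M z / moebiusDen M z) :=
  rfl

theorem slash_add (k : ℕ) (f g : ℂ → ℂ) :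
    slash k M (fun w => f w + g w) z = slash k M f z + slash k M g z :=
  mul_add _ _ _

theorem moebiusNum_mul (N : Matrix (Fin 2) (Fin 2) ℝ) :
    moebiusNum (N * M) z = N 0 0 * moebiusNum M z + N 0 1 * moebiusDen M z := by
  simp [moebiusNum, moebiusDen, Matrix.mul_apply, Fin.sum_univ_two]; ring

theorem moebiusDen_mul (N : Matrix (Fin 2) (Fin 2) ℝ) :
    moebiusDen (N * M) z = N 1 0 * moebiusNum M z + N 1 1 * moebiusDen M z := by
  simp [moebiusNum, moebiusDen, Matrix.mul_apply, Fin.sum_univ_two]; ring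

theorem moebiusNum_neg : moebiusNum (-M) z = -moebiusNum M z := by
  simp [moebiusNum]; ring

theorem moebiusDen_neg : moebiusDen (-M) z = -moebiusDen M z := by
  simp [moebiusDen]; ring

variable {M z}

theorem moebiusDen_ne_zero (hM : M.det ≠ 0) (hz : z.im ≠ 0) : moebiusDen M z ≠ 0 := by
  intro h
  have hc : M 1 0 = 0 := by
    simpa [moebiusDen, hz] using congrArg Complex.im h
  have hd : M 1 1 = 0 := by
    simpa [moebiusDen, hc] using congrArg Complex.re h
  exact hM (by simp [Matrix.det_fin_two, hc, hd])

end Slash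

noncomputable def quadForm (b X Y : ℂ) : ℂ := X ^ 2 - b * X * Y - Y ^ 2

theorem quadForm_neg_neg (b X Y : ℂ) : quadForm b (-X) (-Y) = quadForm b X Y := by
  unfold quadForm; ring

theorem quadForm_neg_one_left (b Y : ℂ) : quadForm b (-1) Y = -quadForm b Y 1 := by
  unfold quadForm; ring

theorem quadForm_heckeGenerator (b X Y : ℂ) : quadForm b (b * X - Y) X = -quadForm (-b) X Y := by
  unfold quadForm; ring

theorem zpow_two_mul_mul_quadForm_div {Y : ℂ} (hY : Y ≠ 0) (b X : ℂ) (n : ℤ) :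
    Y ^ (2 * n) * quadForm b (X / Y) 1 ^ n = quadForm b X Y ^ n := by
  have h : Y ^ 2 * quadForm b (X / Y) 1 = quadForm b X Y := by
    unfold quadForm; field_simp
  rw [← h, mul_zpow, zpow_mul, zpow_ofNat]

theorem slash_quadForm_zpow (b : ℂ) (k : ℕ) {M : Matrix (Fin 2) (Fin 2) ℝ} {z : ℂ}
    (hM : moebiusDen M z ≠ 0) :
    slash k M (fun w => quadForm b w 1 ^ (-(k : ℤ))) z =
      quadForm b (moebiusNum M z) (moebiusDen M z) ^ (-(k : ℤ)) := by
  rw [slash_apply, ← zpow_two_mul_mul_quadForm_div hM, neg_mul_eq_mul_neg]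

noncomputable def heckeRPF (lam : ℝ) (k : ℕ) : ℂ → ℂ := fun w =>
  quadForm lam w 1 ^ (-(k : ℤ)) + quadForm (-lam) w 1 ^ (-(k : ℤ))

section HeckeRPF

variable {lam : ℝ} {k : ℕ} {z : ℂ}

theorem heckeRPF_add_slash_inversion (hk : Odd k) (hz : z ≠ 0) :
    heckeRPF lam k z + slash k !![0, -1; 1, 0] (heckeRPF lam k) z = 0 := by
  have hden : moebiusDen !![0, -1; 1, 0] z = z := by simp [moebiusDen]
  have hnum : moebiusNum !![0, -1; 1, 0] z = -1 := by simp [moebiusNum]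
  unfold heckeRPF
  have hk' : Odd (-(k : ℤ)) := ((Int.odd_coe_nat k).mpr hk).neg
  rw [slash_add, slash_quadForm_zpow _ _ (by rwa [hden]), slash_quadForm_zpow _ _ (by rwa [hden]),
    hden, hnum, quadForm_neg_one_left, quadForm_neg_one_left, hk'.neg_zpow, hk'.neg_zpow]
  ring

theorem slash_heckeRPF {M : Matrix (Fin 2) (Fin 2) ℝ} (hk : Odd k) (hM : moebiusDen M z ≠ 0) :
    slash k M (heckeRPF lam k) z =
      quadForm lam (moebiusNum M z) (moebiusDen M z) ^ (-(k : ℤ)) -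
        quadForm lam (moebiusNum (!![lam, -1; 1, 0] * M) z)
          (moebiusDen (!![lam, -1; 1, 0] * M) z) ^ (-(k : ℤ)) := by
  unfold heckeRPF
  rw [slash_add, slash_quadForm_zpow _ _ hM, slash_quadForm_zpow _ _ hM,
    moebiusNum_mul, moebiusDen_mul]
  simp only [Matrix.of_apply, Matrix.cons_val', Matrix.cons_val_zero, Matrix.cons_val_one,
    Matrix.empty_val', Matrix.cons_val_fin_one]
  push_cast
  rw [one_mul, zero_mul, add_zero, neg_one_mul, ← sub_eq_add_neg, quadForm_heckeGenerator,
    (((Int.odd_coe_nat k).mpr hk).neg).neg_zpow, sub_neg_eq_add]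

end HeckeRPF

theorem stmt8_general (p : ℕ) (hp : 3 ≤ p)
    (lam : ℝ) (hlam : lam = 2 * Real.cos (Real.pi / p))
    (U : Matrix (Fin 2) (Fin 2) ℝ) (hU : U = !![lam, -1; 1, 0])
    (k : ℕ) (hkodd : Odd k)
    (q : ℂ → ℂ)
    (hq : ∀ z : ℂ, q z =
      (z ^ 2 - (lam : ℂ) * z - 1) ^ (-(k : ℤ)) +
      (z ^ 2 + (lam : ℂ) * z - 1) ^ (-(k : ℤ))) :
    ∀ z : ℂ, z.im ≠ 0 →
      q z + z ^ (-(2 * (k : ℤ))) * q (-1 / z) = 0 ∧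
      ∑ j ∈ Finset.range p, slash k (U ^ j) q z = 0 := by
  intro z hz
  subst hU
  obtain rfl : q = heckeRPF lam k := funext fun w => by
    rw [hq, heckeRPF, quadForm, quadForm]; ring_nf
  constructor
  · have hT : z ^ (-(2 * (k : ℤ))) * heckeRPF lam k (-1 / z) =
        slash k !![0, -1; 1, 0] (heckeRPF lam k) z := by
      simp [slash]
    rw [hT]
    exact heckeRPF_add_slash_inversion hkodd fun h => hz (by simp [h])
  · set F : ℕ → ℂ := fun j =>
      quadForm lam (moebiusNum (!![lam, -1; 1, 0] ^ j) z)
        (moebiusDen (!![lam, -1; 1, 0] ^ j) z) ^ (-(k : ℤ))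
    have hdet : ∀ j, (!![lam, -1; 1, 0] ^ j).det ≠ 0 := fun j => by simp [Matrix.det_fin_two]
    have hterm : ∀ j, slash k (!![lam, -1; 1, 0] ^ j) (heckeRPF lam k) z = F j - F (j + 1) :=
      fun j => by rw [slash_heckeRPF hkodd (moebiusDen_ne_zero (hdet j) hz), ← pow_succ']
    have hUp : !![lam, -1; 1, 0] ^ p = -1 := by
      rw [hlam]; exact heckeGenerator_pow_eq_neg_one (by omega)
    rw [Finset.sum_congr rfl fun j _ => hterm j, Finset.sum_range_sub']
    simp only [F, hUp, pow_zero, moebiusNum_neg, moebiusDen_neg, quadForm_neg_neg, sub_self]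

/-- Fix an integer `p ≥ 3`, set `λ = 2cos(π/p)`, and let `k` be an
odd positive integer.  Define `q(z) = (z² - λz - 1)^{-k} + (z² + λz - 1)^{-k}`.
Then `q` satisfies the rational period function relations of weight `2k` on the
Hecke group `G_p`: for every `z ∈ ℂ` with `Im z ≠ 0`,
`q(z) + z^{-2k}·q(-1/z) = 0` and `Σ_{j=0}^{p-1} (q ∣_{2k} U^j)(z) = 0`. -/
theorem stmt8 (p : ℕ) (hp : 3 ≤ p)
    (lam : ℝ) (hlam : lam = 2 * Real.cos (Real.pi / p))
    (U : Matrix (Fin 2) (Fin 2) ℝ) (hU : U = !![lam, -1; 1, 0])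
    (k : ℕ) (hk : 0 < k) (hkodd : Odd k)
    (q : ℂ → ℂ)
    (hq : ∀ z : ℂ, q z =
      (z ^ 2 - (lam : ℂ) * z - 1) ^ (-(k : ℤ)) +
      (z ^ 2 + (lam : ℂ) * z - 1) ^ (-(k : ℤ))) :
    ∀ z : ℂ, z.im ≠ 0 →
      q z + z ^ (-(2 * (k : ℤ))) * q (-1 / z) = 0 ∧
      ∑ j ∈ Finset.range p, slash k (U ^ j) q z = 0 :=
  stmt8_general p hp lam hlam U hU k hkodd q hq
end

section
/- Fix an even integer p ≥ 4, set λ = 2cos(π/p), and let k be an odd positive integer. Define q(z) = (z² - 1)^{-k}. Then q satisfies the rational period function relations of weight 2k on the Hecke group G_p: for every z ∈ ℂ with Im z ≠ 0, q(z) + z^{-2k}·q(-1/z) = 0 and Σ_{j=0}^{p-1} (q |_{2k} U^j)(z) = 0. -/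
open Matrix Real

lemma Function.Antiperiodic.sum_range_add_self_eq_zero {β : Type*} [AddCommGroup β] {f : ℕ → β}
    {m : ℕ} (hf : Function.Antiperiodic f m) : ∑ j ∈ Finset.range (m + m), f j = 0 := by
  simp [Finset.sum_range_add, add_comm m, hf _]

lemma zpow_neg_two_mul_mul_div_sq_sub_one_zpow {K : Type*} [Field K] (k : ℤ) (a : K) {c : K}
    (hc : c ≠ 0) : c ^ (-(2 * k)) * ((a / c) ^ 2 - 1) ^ (-k) = (a ^ 2 - c ^ 2) ^ (-k) := by
  rw [show -(2 * k) = 2 * -k by ring, _root_.zpow_mul, zpow_two, ← sq, ← mul_zpow]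
  congr 1
  field_simp

lemma sq_sub_one_zpow_add_zpow_neg_two_mul_mul {K : Type*} [Field K] {k : ℤ} (hk : Odd k) {z : K}
    (hz : z ≠ 0) : (z ^ 2 - 1) ^ (-k) + z ^ (-(2 * k)) * ((-1 / z) ^ 2 - 1) ^ (-k) = 0 := by
  rw [zpow_neg_two_mul_mul_div_sq_sub_one_zpow _ _ hz, neg_one_sq, ← neg_sub (z ^ 2) 1,
    hk.neg.neg_zpow, add_neg_cancel]

lemma denom_ne_zero_of_det_ne_zero {M : Matrix (Fin 2) (Fin 2) ℝ} (hM : M.det ≠ 0) {z : ℂ}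
    (hz : z.im ≠ 0) : (M 1 0 : ℂ) * z + M 1 1 ≠ 0 := by
  intro h
  have hc : M 1 0 = 0 := by simpa [hz] using congrArg Complex.im h
  have hd : M 1 1 = 0 := by simpa [hc] using h
  exact hM (by simp [det_fin_two, hc, hd])

lemma slash_sq_sub_one_zpow (k : ℕ) {M : Matrix (Fin 2) (Fin 2) ℝ} (hM : M.det ≠ 0) {z : ℂ}
    (hz : z.im ≠ 0) :
    slash k M (fun w => (w ^ 2 - 1) ^ (-(k : ℤ))) z =
      ((M.map (↑) *ᵥ ![z, 1]) 0 ^ 2 - (M.map (↑) *ᵥ ![z, 1]) 1 ^ 2) ^ (-(k : ℤ)) := by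
  simp only [slash, mulVec, dotProduct, Fin.sum_univ_two, map_apply, cons_val_zero, cons_val_one,
    mul_one]
  exact zpow_neg_two_mul_mul_div_sq_sub_one_zpow _ _ (denom_ne_zero_of_det_ne_zero hM hz)

lemma sin_smul_pow (θ : ℝ) (n : ℕ) :
    sin θ • !![2 * cos θ, -1; 1, 0] ^ n =
      !![sin ((n + 1) * θ), -sin (n * θ); sin (n * θ), -sin ((n - 1) * θ)] := by
  induction n with
  | zero =>
    rw [pow_zero, one_fin_two, smul_of]
    ext i j; fin_cases i <;> fin_cases j <;> simp
  | succ n ih =>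
    rw [pow_succ, ← smul_mul_assoc, ih, mul_fin_two]
    have h1 := two_mul_sin_mul_cos ((n + 1) * θ) θ
    have h2 := two_mul_sin_mul_cos (n * θ) θ
    rw [show ((n : ℝ) + 1) * θ - θ = n * θ by ring,
      show ((n : ℝ) + 1) * θ + θ = (n + 1 + 1) * θ by ring] at h1
    rw [show (n : ℝ) * θ - θ = (n - 1) * θ by ring,
      show (n : ℝ) * θ + θ = (n + 1) * θ by ring] at h2
    push_cast
    rw [show (n : ℝ) + 1 - 1 = n by ring]
    ext i j
    fin_cases i <;> fin_cases j <;> simp <;> linarith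

lemma sin_smul_pow_of_mul_eq_pi_div_two {θ : ℝ} {m : ℕ} (h : m * θ = π / 2) :
    sin θ • !![2 * cos θ, -1; 1, 0] ^ m = !![cos θ, -1; 1, -cos θ] := by
  rw [sin_smul_pow, add_mul, sub_mul, h, one_mul, add_comm, sin_add_pi_div_two, sin_pi_div_two,
    sin_pi_div_two_sub]

lemma sq_sub_sq_mulVec_of_smul_eq {s c : ℝ} (hs : s ≠ 0) (hsc : s ^ 2 + c ^ 2 = 1)
    {N : Matrix (Fin 2) (Fin 2) ℝ} (hN : s • N = !![c, -1; 1, -c]) (w : Fin 2 → ℂ) :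
    (N.map (↑) *ᵥ w) 0 ^ 2 - (N.map (↑) *ᵥ w) 1 ^ 2 = -(w 0 ^ 2 - w 1 ^ 2) := by
  rw [← inv_smul_smul₀ hs N, hN]
  have hs' : (s : ℂ) ≠ 0 := by exact_mod_cast hs
  have hsc' : (s : ℂ) ^ 2 + (c : ℂ) ^ 2 = 1 := by exact_mod_cast hsc
  simp only [mulVec, dotProduct, Fin.sum_univ_two, smul_of, smul_cons, smul_empty, smul_eq_mul,
    map_apply, of_apply, cons_val', cons_val_fin_one, cons_val_zero, cons_val_one, mul_neg, mul_one,
    neg_mul, Complex.ofReal_mul, Complex.ofReal_inv, Complex.ofReal_neg]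
  field_simp
  linear_combination (w 0 ^ 2 - w 1 ^ 2) * hsc'

lemma slash_mul_eq_neg {k : ℕ} (hk : Odd k) {s c : ℝ} (hs : s ≠ 0) (hsc : s ^ 2 + c ^ 2 = 1)
    {N M : Matrix (Fin 2) (Fin 2) ℝ} (hN : s • N = !![c, -1; 1, -c]) (hNM : (N * M).det ≠ 0)
    (hM : M.det ≠ 0) {z : ℂ} (hz : z.im ≠ 0) :
    slash k (N * M) (fun w => (w ^ 2 - 1) ^ (-(k : ℤ))) z =
      -slash k M (fun w => (w ^ 2 - 1) ^ (-(k : ℤ))) z := by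
  have hmap : (N * M).map (↑) = N.map (↑) * M.map ((↑) : ℝ → ℂ) :=
    Matrix.map_mul (f := Complex.ofRealHom)
  rw [slash_sq_sub_one_zpow k hNM hz, slash_sq_sub_one_zpow k hM hz, hmap, ← mulVec_mulVec,
    sq_sub_sq_mulVec_of_smul_eq hs hsc hN, (hk.natCast (R := ℤ)).neg.neg_zpow]

theorem stmt10_general (p : ℕ) (hp : 4 ≤ p) (hpeven : Even p)
    (lam : ℝ) (hlam : lam = 2 * Real.cos (Real.pi / p))
    (U : Matrix (Fin 2) (Fin 2) ℝ) (hU : U = !![lam, -1; 1, 0])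
    (k : ℕ) (hkodd : Odd k)
    (q : ℂ → ℂ)
    (hq : ∀ z : ℂ, q z = (z ^ 2 - 1) ^ (-(k : ℤ))) :
    ∀ z : ℂ, z.im ≠ 0 →
      q z + z ^ (-(2 * (k : ℤ))) * q (-1 / z) = 0 ∧
      ∑ j ∈ Finset.range p, slash k (U ^ j) q z = 0 := by
  intro z hz
  obtain rfl : q = fun w => (w ^ 2 - 1) ^ (-(k : ℤ)) := funext hq
  have hz0 : z ≠ 0 := by rintro rfl; simp at hz
  refine ⟨sq_sub_one_zpow_add_zpow_neg_two_mul_mul (hkodd.natCast (R := ℤ)) hz0, ?_⟩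
  obtain ⟨m, rfl⟩ := hpeven
  set θ := π / ((m + m : ℕ) : ℝ)
  have hs : sin θ ≠ 0 :=
    (sin_pos_of_pos_of_lt_pi (by positivity) (div_lt_self pi_pos (by norm_cast; omega))).ne'
  have hmθ : m * θ = π / 2 := by
    have : (m : ℝ) ≠ 0 := by norm_cast; omega
    simp only [θ]; push_cast; field_simp; ring
  have hdet : ∀ j : ℕ, (U ^ j).det ≠ 0 := fun j => by simp [det_pow, hU, det_fin_two]
  refine Function.Antiperiodic.sum_range_add_self_eq_zero (fun j => ?_)
  rw [add_comm, pow_add]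
  exact slash_mul_eq_neg hkodd hs (sin_sq_add_cos_sq θ)
    (hU ▸ hlam ▸ sin_smul_pow_of_mul_eq_pi_div_two hmθ) (pow_add U m j ▸ hdet _) (hdet j) hz

/-- Fix an even integer `p ≥ 4`, set `λ = 2cos(π/p)`, and let `k`
be an odd positive integer.  Define `q(z) = (z² - 1)^{-k}`.  Then `q` satisfies
the rational period function relations of weight `2k` on the Hecke group `G_p`:
for every `z ∈ ℂ` with `Im z ≠ 0`, `q(z) + z^{-2k}·q(-1/z) = 0` and
`Σ_{j=0}^{p-1} (q ∣_{2k} U^j)(z) = 0`. -/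
theorem stmt10 (p : ℕ) (hp : 4 ≤ p) (hpeven : Even p)
    (lam : ℝ) (hlam : lam = 2 * Real.cos (Real.pi / p))
    (U : Matrix (Fin 2) (Fin 2) ℝ) (hU : U = !![lam, -1; 1, 0])
    (k : ℕ) (hk : 0 < k) (hkodd : Odd k)
    (q : ℂ → ℂ)
    (hq : ∀ z : ℂ, q z = (z ^ 2 - 1) ^ (-(k : ℤ))) :
    ∀ z : ℂ, z.im ≠ 0 →
      q z + z ^ (-(2 * (k : ℤ))) * q (-1 / z) = 0 ∧
      ∑ j ∈ Finset.range p, slash k (U ^ j) q z = 0 :=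
  stmt10_general p hp hpeven lam hlam U hU k hkodd q hq
end

section
/- Fix an integer p ≥ 5 and set λ = 2cos(π/p), so that λ² - 1 > 0. Define q(z) = √(λ²-1)/(√(λ²-1)·z - 1) - 1/(z + √(λ²-1)). Then q satisfies the rational period function relations of weight 2 on the Hecke group G_p: for every z ∈ ℂ with Im z ≠ 0, q(z) + z^{-2}·q(-1/z) = 0 and Σ_{j=0}^{p-1} (q |_{2} U^j)(z) = 0. (Its poles 1/√(λ²-1) and -√(λ²-1) form a single irreducible system of poles without Hecke-symmetry.) -/
open scoped Matrix

lemma ofReal_mul_add_ne_zero {v : Fin 2 → ℝ} (hv : v ≠ 0) {z : ℂ} (hz : z.im ≠ 0) :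
    (v 0 : ℂ) * z + v 1 ≠ 0 := by
  intro h
  have h0 : v 0 = 0 := by simpa [hz] using congrArg Complex.im h
  have h1 : v 1 = 0 := by simpa [h0] using congrArg Complex.re h
  exact hv (funext fun i => by fin_cases i <;> assumption)

noncomputable def linLogDeriv (v : Fin 2 → ℝ) (z : ℂ) : ℂ := v 0 / (v 0 * z + v 1)

lemma linLogDeriv_smul {μ : ℝ} (hμ : μ ≠ 0) (v : Fin 2 → ℝ) :
    linLogDeriv (μ • v) = linLogDeriv v := by
  funext z
  simp only [linLogDeriv, Pi.smul_apply, smul_eq_mul, Complex.ofReal_mul, mul_assoc, ← mul_add]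
  exact mul_div_mul_left _ _ (Complex.ofReal_ne_zero.mpr hμ)

lemma linLogDeriv_neg (v : Fin 2 → ℝ) : linLogDeriv (-v) = linLogDeriv v := by
  rw [← neg_one_smul ℝ v, linLogDeriv_smul (by norm_num)]

lemma slash_sub (k : ℕ) (M : Matrix (Fin 2) (Fin 2) ℝ) (f g : ℂ → ℂ) (z : ℂ) :
    slash k M (f - g) z = slash k M f z - slash k M g z := by
  simp only [slash, Pi.sub_apply, mul_sub]

lemma slash_linLogDeriv {M : Matrix (Fin 2) (Fin 2) ℝ} (hM : M.det = 1) {v : Fin 2 → ℝ}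
    (hv : v ≠ 0) {z : ℂ} (hz : z.im ≠ 0) :
    slash 1 M (linLogDeriv v) z = linLogDeriv (v ᵥ* M) z - linLogDeriv (![0, 1] ᵥ* M) z := by
  have hM0 : M.det ≠ 0 := by simp [hM]
  have hD := ofReal_mul_add_ne_zero
    (mt (Matrix.eq_zero_of_vecMul_eq_zero hM0) (by simp : ![(0 : ℝ), 1] ≠ 0)) hz
  have hW := ofReal_mul_add_ne_zero (mt (Matrix.eq_zero_of_vecMul_eq_zero hM0) hv) hz
  obtain ⟨a, b, c, d, rfl⟩ : ∃ a b c d, M = !![a, b; c, d] := ⟨_, _, _, _, M.eta_fin_two⟩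
  rw [Matrix.det_fin_two_of] at hM
  have hdet : (a * d - b * c : ℂ) = 1 := by exact_mod_cast hM
  simp only [slash, linLogDeriv, Matrix.vecMul, dotProduct, Fin.sum_univ_two, Matrix.of_apply,
    Matrix.cons_val', Matrix.cons_val_zero, Matrix.cons_val_one, Matrix.cons_val_fin_one, zero_mul,
    one_mul, zero_add, Complex.ofReal_add, Complex.ofReal_mul, Nat.cast_one, mul_one, zpow_neg,
    zpow_ofNat] at hD hW ⊢
  have hinner : (v 0 : ℂ) * ((a * z + b) / (c * z + d)) + v 1
      = ((v 0 * a + v 1 * c) * z + (v 0 * b + v 1 * d)) / (c * z + d) := by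
    rw [eq_div_iff hD, add_mul, mul_assoc, div_mul_cancel₀ _ hD]; ring
  have hnum : ((v 0 : ℂ) * a + v 1 * c) * (c * z + d)
      - ((v 0 * a + v 1 * c) * z + (v 0 * b + v 1 * d)) * c = v 0 := by
    linear_combination (v 0 : ℂ) * hdet
  rw [hinner, div_div_eq_mul_div, div_sub_div _ _ hW hD, hnum]
  field_simp

lemma sum_range_slash_pow_linLogDeriv_sub {M : Matrix (Fin 2) (Fin 2) ℝ} (hM : M.det = 1)
    {p : ℕ} (hMp : M ^ p = -1) {v : Fin 2 → ℝ} (hv : v ≠ 0) {z : ℂ} (hz : z.im ≠ 0) :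
    ∑ j ∈ Finset.range p,
      slash 1 (M ^ j) (linLogDeriv (v ᵥ* M ^ 2) - linLogDeriv v) z = 0 := by
  have hdet (j : ℕ) : (M ^ j).det = 1 := by rw [Matrix.det_pow, hM, one_pow]
  set F : ℕ → ℂ := fun n => linLogDeriv (v ᵥ* M ^ n) z with hF
  have hterm (j : ℕ) : slash 1 (M ^ j) (linLogDeriv (v ᵥ* M ^ 2) - linLogDeriv v) z
      = (F (j + 2) - F (j + 1)) + (F (j + 1) - F j) := by
    have hv2 : v ᵥ* M ^ 2 ≠ 0 := mt (Matrix.eq_zero_of_vecMul_eq_zero (by simp [hdet])) hv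
    rw [slash_sub, slash_linLogDeriv (hdet j) hv2 hz, slash_linLogDeriv (hdet j) hv hz,
      Matrix.vecMul_vecMul, ← pow_add, add_comm 2 j]
    ring
  have hFp : F p = F 0 := by
    simp only [hF, hMp, Matrix.vecMul_neg, Matrix.vecMul_one, linLogDeriv_neg, pow_zero]
  have hFp1 : F (p + 1) = F 1 := by
    simp only [hF, pow_succ M p, hMp, neg_one_mul, Matrix.vecMul_neg, linLogDeriv_neg, pow_one]
  rw [Finset.sum_congr rfl fun j _ => hterm j, Finset.sum_add_distrib,
    Finset.sum_range_sub (fun n => F (n + 1)), Finset.sum_range_sub F, hFp, hFp1, sub_self,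
    sub_self, add_zero]

lemma sin_smul_pow_succ {R : Type*} [Ring R] [Algebra ℝ R] {θ : ℝ} {A : R}
    (hA : A ^ 2 = (2 * Real.cos θ) • A - 1) (n : ℕ) :
    Real.sin θ • A ^ (n + 1) = Real.sin ((n + 1) * θ) • A - Real.sin (n * θ) • 1 := by
  induction n with
  | zero => simp
  | succ n ih =>
    have hsin : Real.sin ((n + 1 + 1) * θ)
        = 2 * Real.cos θ * Real.sin ((n + 1) * θ) - Real.sin (n * θ) := by
      rw [add_mul _ 1, one_mul, Real.sin_add, show (n : ℝ) * θ = (n + 1) * θ - θ by ring,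
        Real.sin_sub]
      ring
    rw [pow_succ, ← smul_mul_assoc, ih, sub_mul, smul_mul_assoc, ← sq, hA, smul_mul_assoc,
      one_mul]
    push_cast
    rw [hsin]
    module

lemma pow_eq_neg_one_of_sq_eq {R : Type*} [Ring R] [Algebra ℝ R] {p : ℕ} (hp : 2 ≤ p) {A : R}
    (hA : A ^ 2 = (2 * Real.cos (Real.pi / p)) • A - 1) : A ^ p = -1 := by
  obtain ⟨n, rfl⟩ : ∃ n, p = n + 1 := ⟨p - 1, by omega⟩
  have hθ : 0 < Real.sin (Real.pi / (n + 1 : ℕ)) := by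
    apply Real.sin_pos_of_pos_of_lt_pi (by positivity)
    exact div_lt_self Real.pi_pos (by exact_mod_cast (by omega : 1 < n + 1))
  have h := sin_smul_pow_succ hA n
  have hπ : ((n : ℝ) + 1) * (Real.pi / (n + 1 : ℕ)) = Real.pi := by push_cast; field_simp
  have hnθ : (n : ℝ) * (Real.pi / (n + 1 : ℕ)) = Real.pi - Real.pi / (n + 1 : ℕ) := by
    linear_combination hπ
  rw [hπ, hnθ, Real.sin_pi, Real.sin_pi_sub, zero_smul, zero_sub, ← smul_neg] at h
  exact smul_right_injective R hθ.ne' h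

lemma cos_pi_div_pos {p : ℕ} (hp : 3 ≤ p) : 0 < Real.cos (Real.pi / p) := by
  have hp3 : (3 : ℝ) ≤ p := by exact_mod_cast hp
  have hθ : 0 < Real.pi / p := div_pos Real.pi_pos (by linarith)
  exact Real.cos_pos_of_mem_Ioo
    ⟨by linarith [Real.pi_pos], div_lt_div_of_pos_left Real.pi_pos two_pos (by linarith)⟩

lemma slash_T_linLogDeriv_sub (s : ℝ) {z : ℂ} (hz : z.im ≠ 0) :
    slash 1 !![0, -1; 1, 0] (linLogDeriv ![s, -1] - linLogDeriv ![1, s]) z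
      = -(linLogDeriv ![s, -1] - linLogDeriv ![1, s]) z := by
  have hT : (!![0, -1; 1, 0] : Matrix (Fin 2) (Fin 2) ℝ).det = 1 := by
    simp [Matrix.det_fin_two_of]
  have hw : ![s, -1] ᵥ* !![0, -1; 1, 0] = -![1, s] := by
    ext i; fin_cases i <;> simp [Matrix.vecMul, dotProduct, Fin.sum_univ_two]
  have hv : ![1, s] ᵥ* !![0, -1; 1, 0] = ![s, -1] := by
    ext i; fin_cases i <;> simp [Matrix.vecMul, dotProduct, Fin.sum_univ_two]
  rw [slash_sub, slash_linLogDeriv hT (by simp) hz, slash_linLogDeriv hT (by simp) hz, hw, hv,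
    linLogDeriv_neg, Pi.sub_apply]
  ring

/-- Fix an integer `p ≥ 5` and set `λ = 2cos(π/p)`, so that
`λ² - 1 > 0`.  Define
`q(z) = √(λ²-1)/(√(λ²-1)·z - 1) - 1/(z + √(λ²-1))`.
Then `q` satisfies the rational period function relations of weight `2` on the
Hecke group `G_p`: for every `z ∈ ℂ` with `Im z ≠ 0`,
`q(z) + z^{-2}·q(-1/z) = 0` and `Σ_{j=0}^{p-1} (q ∣_2 U^j)(z) = 0`. -/
theorem stmt12 (p : ℕ) (hp : 5 ≤ p)
    (lam : ℝ) (hlam : lam = 2 * Real.cos (Real.pi / p))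
    (hlam1 : lam ^ 2 - 1 > 0)
    (U : Matrix (Fin 2) (Fin 2) ℝ) (hU : U = !![lam, -1; 1, 0])
    (q : ℂ → ℂ)
    (hq : ∀ z : ℂ, q z =
      (Real.sqrt (lam ^ 2 - 1) : ℂ) / ((Real.sqrt (lam ^ 2 - 1) : ℂ) * z - 1) -
      1 / (z + (Real.sqrt (lam ^ 2 - 1) : ℂ))) :
    ∀ z : ℂ, z.im ≠ 0 →
      q z + z ^ (-2 : ℤ) * q (-1 / z) = 0 ∧
      ∑ j ∈ Finset.range p, slash 1 (U ^ j) q z = 0 := by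
  intro z hz
  set s := Real.sqrt (lam ^ 2 - 1)
  have hs : s ^ 2 = lam ^ 2 - 1 := Real.sq_sqrt hlam1.le
  have hq' : q = linLogDeriv ![s, -1] - linLogDeriv ![1, s] := by
    funext z; simp [hq, linLogDeriv, sub_eq_add_neg]
  have hUsq : U ^ 2 = (2 * Real.cos (Real.pi / p)) • U - 1 := by
    rw [← hlam, hU]; ext i j; fin_cases i <;> fin_cases j <;> simp [sq, sub_eq_add_neg]
  have hUv : ![1, s] ᵥ* U ^ 2 = (s + lam) • ![s, -1] := by
    rw [hUsq, Matrix.vecMul_sub, Matrix.vecMul_smul, Matrix.vecMul_one, ← hlam, hU]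
    ext i; fin_cases i
    · simp only [Matrix.vecMul_cons, Matrix.head_cons, Matrix.tail_cons, Matrix.smul_cons,
        Matrix.smul_empty, Matrix.empty_vecMul, Matrix.add_cons, Matrix.empty_add_empty,
        one_smul, smul_eq_mul, mul_one, mul_zero, mul_neg, add_zero, Fin.zero_eta, Pi.sub_apply,
        Pi.smul_apply, Matrix.cons_val_zero]
      linear_combination -hs
    · simp [Matrix.vecMul_cons, sub_eq_add_neg]
  constructor
  · have hT : z ^ (-2 : ℤ) * q (-1 / z) = slash 1 !![0, -1; 1, 0] q z := by simp [slash]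
    rw [hT, hq', slash_T_linLogDeriv_sub s hz, add_neg_cancel]
  · have hlam0 : 0 < lam := hlam ▸ mul_pos two_pos (cos_pi_div_pos (by omega))
    have hsl : s + lam ≠ 0 := (add_pos (Real.sqrt_pos.mpr hlam1) hlam0).ne'
    rw [hq', ← linLogDeriv_smul hsl, ← hUv]
    exact sum_range_slash_pow_linLogDeriv_sub (by simp [hU, Matrix.det_fin_two_of])
      (pow_eq_neg_one_of_sq_eq (by omega) hUsq) (by simp) hz
end

section
/- Let p = 3 and λ = 2cos(π/3) = 1, so U = ((1,-1),(1,0)). Set α₁ = (1+√5)/2, α₁′ = (1-√5)/2, α₂ = (-1+√5)/2, α₂′ = (-1-√5)/2, and define q(z) = (-2/√5)/(z-α₁) + 1/(z-α₁)² - (2/√5)/(z-α₁′) - 1/(z-α₁′)² + (-2/√5)/(z-α₂) + 1/(z-α₂)² - (2/√5)/(z-α₂′) - 1/(z-α₂′)² + (8/√5)/z. Then q satisfies the rational period function relations of weight 4 on the modular group G_3: for every z ∈ ℂ with Im z ≠ 0, q(z) + z^{-4}·q(-1/z) = 0 and q(z) + (q |_{4} U)(z) + (q |_{4} U²)(z)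 = 0. -/
open Complex

theorem sub_ofReal_ne_zero {z : ℂ} (hz : z.im ≠ 0) (r : ℝ) : z - r ≠ 0 := by
  intro h
  apply hz
  simpa using congrArg im h

theorem ne_zero_of_im_ne_zero {z : ℂ} (hz : z.im ≠ 0) : z ≠ 0 := by
  rintro rfl
  simp at hz

theorem im_neg_one_div_ne_zero {z : ℂ} (hz : z.im ≠ 0) : (-1 / z).im ≠ 0 := by
  have hn : normSq z ≠ 0 := normSq_pos.mpr (ne_zero_of_im_ne_zero hz) |>.ne'
  simpa [neg_div, inv_im, hn] using hz

theorem im_sub_one_div_self_ne_zero {z : ℂ} (hz : z.im ≠ 0) : ((z - 1) / z).im ≠ 0 := by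
  have h : (z - 1) / z = 1 + -1 / z := by field_simp [ne_zero_of_im_ne_zero hz]; ring
  simpa [h] using im_neg_one_div_ne_zero hz

theorem quadratic_ne_zero_of_im_ne_zero {z : ℂ} (hz : z.im ≠ 0) {b c : ℝ}
    (hdisc : 0 ≤ b ^ 2 - 4 * c) : z ^ 2 + b * z + c ≠ 0 := by
  intro h
  have hre := congrArg re h
  have him := congrArg im h
  simp only [pow_two, add_re, add_im, mul_re, mul_im, ofReal_re, ofReal_im, zero_re,
    zero_im] at hre him
  have hx : 2 * z.re + b = 0 := by
    have : z.im * (2 * z.re + b) = 0 := by linear_combination him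
    exact (mul_eq_zero.mp this).resolve_left hz
  nlinarith [sq_pos_of_ne_zero hz]

theorem sq_sub_sub_one_ne_zero {z : ℂ} (hz : z.im ≠ 0) : z ^ 2 - z - 1 ≠ 0 := by
  convert quadratic_ne_zero_of_im_ne_zero hz (b := -1) (c := -1) (by norm_num) using 1
  push_cast; ring

theorem sq_add_sub_one_ne_zero {z : ℂ} (hz : z.im ≠ 0) : z ^ 2 + z - 1 ≠ 0 := by
  convert quadratic_ne_zero_of_im_ne_zero hz (b := 1) (c := -1) (by norm_num) using 1
  push_cast; ring

theorem sq_sub_three_mul_add_one_ne_zero {z : ℂ} (hz : z.im ≠ 0) : z ^ 2 - 3 * z + 1 ≠ 0 := by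
  convert quadratic_ne_zero_of_im_ne_zero hz (b := -3) (c := 1) (by norm_num) using 1
  push_cast; ring

theorem partialFraction_root_pair {z α β s t n : ℂ} (hα : z - α ≠ 0) (hβ : z - β ≠ 0)
    (hs : s ≠ 0) (hdiff : α - β = s) (hsum : α + β = t) (hprod : α * β = n) :
    -2 / s / (z - α) + 1 / (z - α) ^ 2 - 2 / s / (z - β) - 1 / (z - β) ^ 2 =
      (2 * z - t) * (t ^ 2 - 4 * n - 2 * (z ^ 2 - t * z + n)) / (z ^ 2 - t * z + n) ^ 2 / s := by
  subst hdiff hsum hprod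
  have hquad : z ^ 2 - (α + β) * z + α * β = (z - α) * (z - β) := by ring
  rw [hquad]
  field_simp
  ring

noncomputable def q₀ (z : ℂ) : ℂ :=
  (2 * z - 1) * (5 - 2 * (z ^ 2 - z - 1)) / (z ^ 2 - z - 1) ^ 2 +
    (2 * z + 1) * (5 - 2 * (z ^ 2 + z - 1)) / (z ^ 2 + z - 1) ^ 2 + 8 / z

-- The quadratic factors are generalized to atoms so that `field_simp` does not expand
-- them and lose track of their being nonzero.
theorem q₀_neg_one_div {z : ℂ} (hz : z.im ≠ 0) : q₀ (-1 / z) = -z ^ 4 * q₀ z := by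
  have h0 := ne_zero_of_im_ne_zero hz
  have hA := sq_sub_sub_one_ne_zero hz
  have hB := sq_add_sub_one_ne_zero hz
  have eA : (-1 / z) ^ 2 - -1 / z - 1 = -(z ^ 2 - z - 1) / z ^ 2 := by field_simp; ring
  have eB : (-1 / z) ^ 2 + -1 / z - 1 = -(z ^ 2 + z - 1) / z ^ 2 := by field_simp; ring
  rw [q₀, q₀, eA, eB]
  generalize ha : z ^ 2 - z - 1 = a at *
  generalize hb : z ^ 2 + z - 1 = b at *
  field_simp
  subst ha hb
  ring

theorem q₀_add_sub_one_div_self {z : ℂ} (hz : z.im ≠ 0) :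
    q₀ z + q₀ ((z - 1) / z) / z ^ 4 = q₀ (z - 1) := by
  have h0 := ne_zero_of_im_ne_zero hz
  have hA := sq_sub_sub_one_ne_zero hz
  have hB := sq_add_sub_one_ne_zero hz
  have hC := sq_sub_three_mul_add_one_ne_zero hz
  have h1 : z - 1 ≠ 0 := by simpa using sub_ofReal_ne_zero hz 1
  have eA : ((z - 1) / z) ^ 2 - (z - 1) / z - 1 = -(z ^ 2 + z - 1) / z ^ 2 := by
    field_simp; ring
  have eB : ((z - 1) / z) ^ 2 + (z - 1) / z - 1 = (z ^ 2 - 3 * z + 1) / z ^ 2 := by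
    field_simp; ring
  have eA' : (z - 1) ^ 2 - (z - 1) - 1 = z ^ 2 - 3 * z + 1 := by ring
  have eB' : (z - 1) ^ 2 + (z - 1) - 1 = z ^ 2 - z - 1 := by ring
  rw [q₀, q₀, q₀, eA, eB, eA', eB']
  generalize ha : z ^ 2 - z - 1 = a at *
  generalize hb : z ^ 2 + z - 1 = b at *
  generalize hc : z ^ 2 - 3 * z + 1 = c at *
  field_simp
  subst ha hb hc
  ring

theorem q₀_period_relation_T {z : ℂ} (hz : z.im ≠ 0) : q₀ z + z ^ (-4 : ℤ) * q₀ (-1 / z) = 0 := by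
  rw [q₀_neg_one_div hz, zpow_neg, zpow_ofNat]
  field_simp [ne_zero_of_im_ne_zero hz]
  ring

theorem q₀_period_relation_U {z : ℂ} (hz : z.im ≠ 0) :
    q₀ z + z ^ (-4 : ℤ) * q₀ ((z - 1) / z) + (z - 1) ^ (-4 : ℤ) * q₀ (-1 / (z - 1)) = 0 := by
  have hz1 : (z - 1).im ≠ 0 := by simpa using hz
  rw [q₀_neg_one_div hz1, zpow_neg, zpow_neg, zpow_ofNat, zpow_ofNat,
    ← q₀_add_sub_one_div_self hz]
  field_simp [ne_zero_of_im_ne_zero hz, ne_zero_of_im_ne_zero hz1]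
  ring

theorem slash_U (k : ℕ) (f : ℂ → ℂ) (z : ℂ) :
    slash k !![1, -1; 1, 0] f z = z ^ (-(2 * (k : ℤ))) * f ((z - 1) / z) := by
  simp [slash, sub_eq_add_neg]

theorem slash_U_sq (k : ℕ) (f : ℂ → ℂ) (z : ℂ) :
    slash k !![0, -1; 1, -1] f z = (z - 1) ^ (-(2 * (k : ℤ))) * f (-1 / (z - 1)) := by
  simp [slash, sub_eq_add_neg]

/-- Let `p = 3` and `λ = 2cos(π/3) = 1`, so `U = ((1,-1),(1,0))`.
Set `α₁ = (1+√5)/2`, `α₁′ = (1-√5)/2`, `α₂ = (-1+√5)/2`, `α₂′ = (-1-√5)/2`, and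
define `q(z) = (-2/√5)/(z-α₁) + 1/(z-α₁)² - (2/√5)/(z-α₁′) - 1/(z-α₁′)²
+ (-2/√5)/(z-α₂) + 1/(z-α₂)² - (2/√5)/(z-α₂′) - 1/(z-α₂′)² + (8/√5)/z`.
Then `q` satisfies the rational period function relations of weight `4` on the
modular group `G_3`: for every `z ∈ ℂ` with `Im z ≠ 0`,
`q(z) + z^{-4}·q(-1/z) = 0` and `q(z) + (q ∣_4 U)(z) + (q ∣_4 U²)(z) = 0`. -/
theorem stmt14
    (lam : ℝ) (hlam : lam = 2 * Real.cos (Real.pi / 3))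
    (U : Matrix (Fin 2) (Fin 2) ℝ) (hU : U = !![lam, -1; 1, 0])
    (α₁ α₁' α₂ α₂' : ℝ)
    (hα₁ : α₁ = (1 + Real.sqrt 5) / 2) (hα₁' : α₁' = (1 - Real.sqrt 5) / 2)
    (hα₂ : α₂ = (-1 + Real.sqrt 5) / 2) (hα₂' : α₂' = (-1 - Real.sqrt 5) / 2)
    (q : ℂ → ℂ)
    (hq : ∀ z : ℂ, q z =
      (-2 / (Real.sqrt 5 : ℂ)) / (z - (α₁ : ℂ)) + 1 / (z - (α₁ : ℂ)) ^ 2 -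
      (2 / (Real.sqrt 5 : ℂ)) / (z - (α₁' : ℂ)) - 1 / (z - (α₁' : ℂ)) ^ 2 +
      (-2 / (Real.sqrt 5 : ℂ)) / (z - (α₂ : ℂ)) + 1 / (z - (α₂ : ℂ)) ^ 2 -
      (2 / (Real.sqrt 5 : ℂ)) / (z - (α₂' : ℂ)) - 1 / (z - (α₂' : ℂ)) ^ 2 +
      (8 / (Real.sqrt 5 : ℂ)) / z) :
    ∀ z : ℂ, z.im ≠ 0 →
      q z + z ^ (-4 : ℤ) * q (-1 / z) = 0 ∧
      q z + slash 2 U q z + slash 2 (U ^ 2) q z = 0 := by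
  have hU' : U = !![1, -1; 1, 0] := by rw [hU, hlam, Real.cos_pi_div_three]; norm_num
  have hU2 : U ^ 2 = !![0, -1; 1, -1] := by rw [hU', sq, Matrix.mul_fin_two]; norm_num
  have hs : (Real.sqrt 5 : ℂ) ≠ 0 := by exact_mod_cast (Real.sqrt_pos.mpr (by norm_num)).ne'
  have hs2 : Real.sqrt 5 ^ 2 = 5 := Real.sq_sqrt (by norm_num)
  have hq₀ : ∀ w : ℂ, w.im ≠ 0 → q w = q₀ w / Real.sqrt 5 := by
    intro w hw
    have pair₁ := partialFraction_root_pair (sub_ofReal_ne_zero hw α₁)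
      (sub_ofReal_ne_zero hw α₁') hs (t := 1) (n := -1)
      (by push_cast [hα₁, hα₁']; ring) (by push_cast [hα₁, hα₁']; ring)
      (by exact_mod_cast (by rw [hα₁, hα₁']; linear_combination -hs2 / 4 : α₁ * α₁' = -1))
    have pair₂ := partialFraction_root_pair (sub_ofReal_ne_zero hw α₂)
      (sub_ofReal_ne_zero hw α₂') hs (t := -1) (n := -1)
      (by push_cast [hα₂, hα₂']; ring) (by push_cast [hα₂, hα₂']; ring)
      (by exact_mod_cast (by rw [hα₂, hα₂']; linear_combination -hs2 / 4 : α₂ * α₂' = -1))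
    rw [hq, q₀]
    linear_combination pair₁ + pair₂
  intro z hz
  constructor
  · rw [hq₀ z hz, hq₀ _ (im_neg_one_div_ne_zero hz)]
    linear_combination q₀_period_relation_T hz / (Real.sqrt 5 : ℂ)
  · have hz1 : (z - 1).im ≠ 0 := by simpa using hz
    rw [hU2, hU', slash_U, slash_U_sq, show -(2 * ((2 : ℕ) : ℤ)) = -4 by rfl, hq₀ z hz,
      hq₀ _ (im_sub_one_div_self_ne_zero hz), hq₀ _ (im_neg_one_div_ne_zero hz1)]
    linear_combination q₀_period_relation_U hz / (Real.sqrt 5 : ℂ)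
end
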